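/- Multiplicative chain rule for the Hellinger-type integral φ_t under a common transmitter strategy: Fix t < 0. Let Q⃗_i(x_i | x^{i−1}, y^{i−1}), i = 1,…,n, be transmitter kernels, and let Q_{Y_i|X_i} and Q̄_{Y_i|X_i} be per-letter channels with all entries positive. Define joint pmfs on X^n × Y^n by Q^n(x^n,y^n) = Π_{i=1}^n Q⃗_i(x_i|x^{i−1},y^{i−1}) Q_{Y_i|X_i}(y_i|x_i) and Q̄^n(x^n,y^n) = Π_{i=1}^n Q⃗_i(x_i|x^{i−1},y^{i−1}) Q̄_{Y_i|X_i}(y_i|x_i). Define the tilted pmf Q̃^{i−1} := (Q^{i−1})^{1−t}(Q̄^{i−1})^t / φ_t(Q^{i−1}‖Q̄^{i−1}) and the tilted input marginal Q̃_{X_i}(x) := Σ_{x^{i−1},y^{i−1}} Q̃^{i−1}(x^{i−1},y^{i−1}) Q⃗_i(x|x^{i−1},y^{i−1}). Then φ_t(Q^n‖Q̄^n) = Π_{i=1}^n φ_t(Q_{Y_i|X_i}‖Q̄_{Y_i|X_i} | Q̃_{X_i}); equivalently, log φ_t(Q^n‖Q̄^n) = Σ_{i=1}^n ψ_t(Q_{Y_i|X_i}‖Q̄_{Y_i|X_i}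 | Q̃_{X_i}). -/

import Mathlib

open Finset

/-- `p` is a probability mass function. -/
def IsDist {Z : Type*} [Fintype Z] (p : Z → ℝ) : Prop :=
  (∀ z, 0 ≤ p z) ∧ ∑ z, p z = 1

/-- The prefix of length `i` of the word `z`. -/
def pre {Z : Type*} {n : ℕ} (z : Fin n → Z) (i : Fin n) : Fin i.val → Z :=
  fun j => z (Fin.castLE i.isLt.le j)

/-- `φ_t(μ‖ν) = Σ_z μ(z)^{1-t} ν(z)^t` for pmfs on a finite set. -/
noncomputable def phiT {Z : Type*} [Fintype Z] (t : ℝ) (μ ν : Z → ℝ) : ℝ :=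
  ∑ z, μ z ^ (1 - t) * ν z ^ t

/-- `φ_t(V‖V̄|μ_X) = Σ_x μ_X(x) Σ_y V(y|x)^{1-t} V̄(y|x)^t`. -/
noncomputable def phiTCond {X Y : Type*} [Fintype X] [Fintype Y] (t : ℝ)
    (V Vb : X → Y → ℝ) (μX : X → ℝ) : ℝ :=
  ∑ x, μX x * ∑ y, V x y ^ (1 - t) * Vb x y ^ t

section ChainRule
variable {X Y : Type*} [Fintype X] [Fintype Y] {n : ℕ}

/-- The joint pmf `Q^n` on `X^n × Y^n` generated by transmitter kernels `T` and
per-letter channels `V`. -/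
noncomputable def Qfull
    (T : (i : Fin n) → (Fin i.val → X) → (Fin i.val → Y) → X → ℝ)
    (V : Fin n → X → Y → ℝ) : (Fin n → X) × (Fin n → Y) → ℝ :=
  fun p => ∏ i : Fin n, T i (pre p.1 i) (pre p.2 i) (p.1 i) * V i (p.1 i) (p.2 i)

/-- The prefix joint pmf `Q^{i-1}` on histories of length `i`. -/
noncomputable def Qpre
    (T : (i : Fin n) → (Fin i.val → X) → (Fin i.val → Y) → X → ℝ)
    (V : Fin n → X → Y → ℝ) (i : Fin n)
    (x : Fin i.val → X) (y : Fin i.val → Y) : ℝ :=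
  ∏ j : Fin i.val,
    T (Fin.castLE i.isLt.le j) (fun k => x (Fin.castLE j.isLt.le k))
        (fun k => y (Fin.castLE j.isLt.le k)) (x j) *
      V (Fin.castLE i.isLt.le j) (x j) (y j)

/-- `φ_t(Q^{i-1} ‖ Q̄^{i-1})`. -/
noncomputable def phiPre (t : ℝ)
    (T : (i : Fin n) → (Fin i.val → X) → (Fin i.val → Y) → X → ℝ)
    (V Vb : Fin n → X → Y → ℝ) (i : Fin n) : ℝ :=
  ∑ x : Fin i.val → X, ∑ y : Fin i.val → Y,
    (Qpre T V i x y) ^ (1 - t) * (Qpre T Vb i x y) ^ t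

/-- The tilted input marginal `Q̃_{X_i}`, obtained by pushing the tilted prefix pmf
`Q̃^{i-1} = (Q^{i-1})^{1-t}(Q̄^{i-1})^t / φ_t(Q^{i-1}‖Q̄^{i-1})` through the transmitter
kernel `T_i`. -/
noncomputable def tiltedInput (t : ℝ)
    (T : (i : Fin n) → (Fin i.val → X) → (Fin i.val → Y) → X → ℝ)
    (V Vb : Fin n → X → Y → ℝ) (i : Fin n) : X → ℝ :=
  fun a => ∑ x : Fin i.val → X, ∑ y : Fin i.val → Y,
    ((Qpre T V i x y) ^ (1 - t) * (Qpre T Vb i x y) ^ t / phiPre t T V Vb i) * T i x y a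

end ChainRule

/-!
Both joint laws share the transmitter factors, so with
`Q^{m+1}(x a, y b) = Q^m(x, y) · T_m(a | x, y) · V_m(b | a)` the summand of `φ_t(Q^{m+1}‖Q̄^{m+1})`
factors as `(Q^m)^{1-t} (Q̄^m)^t · T_m(a | x, y) · V_m(b | a)^{1-t} V̄_m(b | a)^t`, since
`c^{1-t} c^t = c`. Summing out `b` and `a` and normalising the prefix weights by `φ_t(Q^m‖Q̄^m)`
gives `φ_t(Q^{m+1}‖Q̄^{m+1}) = φ_t(Q^m‖Q̄^m) · φ_t(V_m‖V̄_m | Q̃_{X_m})`; induction on `m` gives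
the product. Positive channels keep every factor positive, so the tilting is well defined and
the logarithm splits.
-/

theorem Fin.sum_pi_snoc {Z M : Type*} [Fintype Z] [AddCommMonoid M] {m : ℕ}
    (g : (Fin (m + 1) → Z) → M) :
    ∑ f : Fin (m + 1) → Z, g f = ∑ x : Fin m → Z, ∑ a : Z, g (Fin.snoc x a) := by
  rw [← Fintype.sum_equiv (Fin.snocEquiv fun _ => Z) (fun p => g (Fin.snoc p.2 p.1)) g
    fun _ => rfl, Fintype.sum_prod_type, sum_comm]

theorem Real.mul_rpow_one_sub_mul_mul_rpow {c v w : ℝ} (t : ℝ) (hc : 0 ≤ c) (hv : 0 ≤ v)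
    (hw : 0 ≤ w) : (c * v) ^ (1 - t) * (c * w) ^ t = c * (v ^ (1 - t) * w ^ t) := by
  have hcc : c ^ (1 - t) * c ^ t = c := by
    rw [← Real.rpow_add' hc (by simp), sub_add_cancel, Real.rpow_one]
  rw [Real.mul_rpow hc hv, Real.mul_rpow hc hw, mul_mul_mul_comm, hcc]

section Mixture

variable {α β X Y : Type*} [Fintype α] [Fintype β] [Fintype X] [Fintype Y]

theorem isDist_mixture {w : α → β → ℝ} {W : ℝ} {K : α → β → X → ℝ}
    (hw : ∀ x y, 0 ≤ w x y) (hW : ∑ x, ∑ y, w x y = W) (hW0 : 0 < W)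
    (hK : ∀ x y, IsDist (K x y)) :
    IsDist fun a => ∑ x, ∑ y, w x y / W * K x y a := by
  refine ⟨fun a => sum_nonneg fun x _ => sum_nonneg fun y _ =>
    mul_nonneg (div_nonneg (hw x y) hW0.le) ((hK x y).1 a), ?_⟩
  calc ∑ a, ∑ x, ∑ y, w x y / W * K x y a
      = ∑ x, ∑ y, w x y / W * ∑ a, K x y a := by
        simp only [mul_sum]
        rw [sum_comm]
        exact sum_congr rfl fun x _ => sum_comm
    _ = 1 := by simp only [(hK _ _).2, mul_one, ← sum_div, hW, div_self hW0.ne']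

theorem mul_sum_mixture_mul {w : α → β → ℝ} {W : ℝ} (K : α → β → X → ℝ) (c : X → ℝ)
    (hW0 : W ≠ 0) :
    W * ∑ a, (∑ x, ∑ y, w x y / W * K x y a) * c a = ∑ x, ∑ y, w x y * ∑ a, K x y a * c a := by
  simp only [sum_mul, mul_sum]
  rw [sum_comm]
  refine sum_congr rfl fun x _ => ?_
  rw [sum_comm]
  refine sum_congr rfl fun y _ => sum_congr rfl fun a _ => ?_
  field_simp

theorem phiTCond_pos [Nonempty Y] (t : ℝ) {V Vb : X → Y → ℝ} {μ : X → ℝ} (hμ : IsDist μ)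
    (hV : ∀ x y, 0 < V x y) (hVb : ∀ x y, 0 < Vb x y) : 0 < phiTCond t V Vb μ := by
  have hinner : ∀ a, 0 < ∑ b, V a b ^ (1 - t) * Vb a b ^ t := fun a =>
    sum_pos (fun b _ => mul_pos (Real.rpow_pos_of_pos (hV a b) _)
      (Real.rpow_pos_of_pos (hVb a b) _)) univ_nonempty
  obtain ⟨a, ha⟩ : ∃ a, 0 < μ a := by
    by_contra! h
    linarith [hμ.2, sum_nonpos fun a (_ : a ∈ univ) => h a]
  exact sum_pos' (fun a _ => mul_nonneg (hμ.1 a) (hinner a).le)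
    ⟨a, mem_univ a, mul_pos ha (hinner a)⟩

end Mixture

theorem pre_snoc_castSucc {Z : Type*} {m : ℕ} (z : Fin m → Z) (a : Z) (j : Fin m) :
    pre (Fin.snoc z a : Fin (m + 1) → Z) j.castSucc = pre z j :=
  funext fun k => Fin.snoc_castSucc (α := fun _ => Z) a z (Fin.castLE j.isLt.le k)

theorem pre_snoc_last {Z : Type*} {m : ℕ} (z : Fin m → Z) (a : Z) :
    pre (Fin.snoc z a : Fin (m + 1) → Z) (Fin.last m) = z :=
  funext fun k => Fin.snoc_castSucc (α := fun _ => Z) a z k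

section Prefix

variable {X Y : Type*} {n : ℕ} (T : (i : Fin n) → (Fin i.val → X) → (Fin i.val → Y) → X → ℝ)

/-- `Qpre` with the prefix length an arbitrary `m ≤ n`: `Qpre T V i` is `QpreLE T V i i.isLt.le`
by definition, and `m = n` recovers `Qfull`. -/
noncomputable def QpreLE (V : Fin n → X → Y → ℝ) (m : ℕ) (h : m ≤ n) (x : Fin m → X)
    (y : Fin m → Y) : ℝ :=
  ∏ j : Fin m, T (Fin.castLE h j) (pre x j) (pre y j) (x j) * V (Fin.castLE h j) (x j) (y j)

theorem QpreLE_snoc (V : Fin n → X → Y → ℝ) {m : ℕ} (h : m + 1 ≤ n) (x : Fin m → X)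
    (y : Fin m → Y) (a : X) (b : Y) :
    QpreLE T V (m + 1) h (Fin.snoc x a) (Fin.snoc y b) =
      QpreLE T V m (Nat.le_of_succ_le h) x y * (T ⟨m, h⟩ x y a * V ⟨m, h⟩ a b) := by
  simp only [QpreLE, Fin.prod_univ_castSucc, Fin.snoc_castSucc, Fin.snoc_last, pre_snoc_castSucc,
    pre_snoc_last]
  rfl

theorem QpreLE_nonneg {V : Fin n → X → Y → ℝ} (hT : ∀ i x y a, 0 ≤ T i x y a)
    (hV : ∀ i a b, 0 ≤ V i a b) (m : ℕ) (h : m ≤ n) (x : Fin m → X) (y : Fin m → Y) :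
    0 ≤ QpreLE T V m h x y :=
  prod_nonneg fun _ _ => mul_nonneg (hT ..) (hV ..)

end Prefix

section ChainRule

variable {X Y : Type*} [Fintype X] [Fintype Y] {n : ℕ} (t : ℝ)
  (T : (i : Fin n) → (Fin i.val → X) → (Fin i.val → Y) → X → ℝ) (V Vb : Fin n → X → Y → ℝ)

noncomputable def phiPreLE (m : ℕ) (h : m ≤ n) : ℝ :=
  ∑ x : Fin m → X, ∑ y : Fin m → Y, QpreLE T V m h x y ^ (1 - t) * QpreLE T Vb m h x y ^ t

theorem phiT_Qfull : phiT t (Qfull T V) (Qfull T Vb) = phiPreLE t T V Vb n le_rfl := by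
  rw [phiT, Fintype.sum_prod_type]
  rfl

theorem phiPreLE_zero : phiPreLE t T V Vb 0 n.zero_le = 1 := by
  simp [phiPreLE, QpreLE]

theorem phiPreLE_succ (hT : ∀ i x y a, 0 ≤ T i x y a) (hV : ∀ i a b, 0 ≤ V i a b)
    (hVb : ∀ i a b, 0 ≤ Vb i a b) {m : ℕ} (h : m + 1 ≤ n)
    (hφ : phiPreLE t T V Vb m (Nat.le_of_succ_le h) ≠ 0) :
    phiPreLE t T V Vb (m + 1) h = phiPreLE t T V Vb m (Nat.le_of_succ_le h) *
      phiTCond t (V ⟨m, h⟩) (Vb ⟨m, h⟩) (tiltedInput t T V Vb ⟨m, h⟩) := by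
  have h' : m ≤ n := Nat.le_of_succ_le h
  calc phiPreLE t T V Vb (m + 1) h
      = ∑ x, ∑ y, QpreLE T V m h' x y ^ (1 - t) * QpreLE T Vb m h' x y ^ t *
          ∑ a, T ⟨m, h⟩ x y a * ∑ b, V ⟨m, h⟩ a b ^ (1 - t) * Vb ⟨m, h⟩ a b ^ t := by
        simp only [phiPreLE, Fin.sum_pi_snoc, QpreLE_snoc]
        refine sum_congr rfl fun x _ => ?_
        rw [sum_comm]
        refine sum_congr rfl fun y _ => ?_
        simp only [mul_sum]
        refine sum_congr rfl fun a _ => sum_congr rfl fun b _ => ?_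
        rw [Real.mul_rpow (QpreLE_nonneg T hT hV ..) (mul_nonneg (hT ..) (hV ..)),
          Real.mul_rpow (QpreLE_nonneg T hT hVb ..) (mul_nonneg (hT ..) (hVb ..)),
          mul_mul_mul_comm, Real.mul_rpow_one_sub_mul_mul_rpow t (hT ..) (hV ..) (hVb ..)]
    _ = _ := (mul_sum_mixture_mul _ _ hφ).symm

theorem tiltedInput_isDist (hT : ∀ i x y, IsDist (T i x y)) (hV : ∀ i a b, 0 ≤ V i a b)
    (hVb : ∀ i a b, 0 ≤ Vb i a b) (i : Fin n) (hφ : 0 < phiPre t T V Vb i) :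
    IsDist (tiltedInput t T V Vb i) :=
  isDist_mixture
    (fun _ _ => mul_nonneg (Real.rpow_nonneg (QpreLE_nonneg T (fun i x y => (hT i x y).1) hV ..) _)
      (Real.rpow_nonneg (QpreLE_nonneg T (fun i x y => (hT i x y).1) hVb ..) _))
    rfl hφ (hT i)

variable [Nonempty Y]

theorem phiTCond_tiltedInput_pos (hT : ∀ i x y, IsDist (T i x y)) (hV : ∀ i a b, 0 < V i a b)
    (hVb : ∀ i a b, 0 < Vb i a b) (i : Fin n) (hφ : 0 < phiPre t T V Vb i) :
    0 < phiTCond t (V i) (Vb i) (tiltedInput t T V Vb i) :=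
  phiTCond_pos t
    (tiltedInput_isDist t T V Vb hT (fun i a b => (hV i a b).le) (fun i a b => (hVb i a b).le) i hφ)
    (hV i) (hVb i)

theorem phiPreLE_pos (hT : ∀ i x y, IsDist (T i x y)) (hV : ∀ i a b, 0 < V i a b)
    (hVb : ∀ i a b, 0 < Vb i a b) :
    ∀ (m : ℕ) (h : m ≤ n), 0 < phiPreLE t T V Vb m h
  | 0, _ => by rw [phiPreLE_zero]; exact one_pos
  | m + 1, h => by
    have hφ := phiPreLE_pos hT hV hVb m (Nat.le_of_succ_le h)
    rw [phiPreLE_succ t T V Vb (fun i x y => (hT i x y).1) (fun i a b => (hV i a b).le)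
      (fun i a b => (hVb i a b).le) h hφ.ne']
    exact mul_pos hφ (phiTCond_tiltedInput_pos t T V Vb hT hV hVb ⟨m, h⟩ hφ)

theorem phiPreLE_eq_prod (hT : ∀ i x y, IsDist (T i x y)) (hV : ∀ i a b, 0 < V i a b)
    (hVb : ∀ i a b, 0 < Vb i a b) :
    ∀ (m : ℕ) (h : m ≤ n), phiPreLE t T V Vb m h =
      ∏ j : Fin m, phiTCond t (V (Fin.castLE h j)) (Vb (Fin.castLE h j))
        (tiltedInput t T V Vb (Fin.castLE h j))
  | 0, _ => by rw [phiPreLE_zero, Fin.prod_univ_zero]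
  | m + 1, h => by
    rw [phiPreLE_succ t T V Vb (fun i x y => (hT i x y).1) (fun i a b => (hV i a b).le)
      (fun i a b => (hVb i a b).le) h (phiPreLE_pos t T V Vb hT hV hVb m _).ne',
      phiPreLE_eq_prod hT hV hVb m, Fin.prod_univ_castSucc]
    rfl

end ChainRule

theorem phiT_chain_rule_general
    {X Y : Type} [Fintype X] [Fintype Y] [Nonempty Y] {n : ℕ}
    (t : ℝ)
    (T : (i : Fin n) → (Fin i.val → X) → (Fin i.val → Y) → X → ℝ)
    (hT : ∀ i x y, IsDist (T i x y))
    (V Vb : Fin n → X → Y → ℝ)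
    (hVpos : ∀ i x y, 0 < V i x y) (hVbpos : ∀ i x y, 0 < Vb i x y) :
    phiT t (Qfull T V) (Qfull T Vb) =
      (∏ i : Fin n, phiTCond t (V i) (Vb i) (tiltedInput t T V Vb i)) ∧
    Real.log (phiT t (Qfull T V) (Qfull T Vb)) =
      ∑ i : Fin n, Real.log (phiTCond t (V i) (Vb i) (tiltedInput t T V Vb i)) := by
  have hprod : phiT t (Qfull T V) (Qfull T Vb) =
      ∏ i : Fin n, phiTCond t (V i) (Vb i) (tiltedInput t T V Vb i) := by
    rw [phiT_Qfull, phiPreLE_eq_prod t T V Vb hT hVpos hVbpos]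
    rfl
  have hpos (i : Fin n) : 0 < phiTCond t (V i) (Vb i) (tiltedInput t T V Vb i) :=
    phiTCond_tiltedInput_pos t T V Vb hT hVpos hVbpos i
      (phiPreLE_pos t T V Vb hT hVpos hVbpos i i.isLt.le)
  exact ⟨hprod, by rw [hprod, Real.log_prod fun i _ => (hpos i).ne']⟩

/-- Multiplicative chain rule for `φ_t` under a common transmitter strategy:
`φ_t(Q^n‖Q̄^n) = Π_i φ_t(Q_{Y_i|X_i}‖Q̄_{Y_i|X_i} | Q̃_{X_i})`, and equivalently
`log φ_t(Q^n‖Q̄^n) = Σ_i ψ_t(Q_{Y_i|X_i}‖Q̄_{Y_i|X_i} | Q̃_{X_i})`. -/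
theorem phiT_chain_rule
    {X Y : Type} [Fintype X] [Fintype Y] [Nonempty X] [Nonempty Y] {n : ℕ}
    (t : ℝ) (ht : t < 0)
    (T : (i : Fin n) → (Fin i.val → X) → (Fin i.val → Y) → X → ℝ)
    (hT : ∀ i x y, IsDist (T i x y))
    (V Vb : Fin n → X → Y → ℝ)
    (hV : ∀ i x, IsDist (V i x)) (hVb : ∀ i x, IsDist (Vb i x))
    (hVpos : ∀ i x y, 0 < V i x y) (hVbpos : ∀ i x y, 0 < Vb i x y) :
    phiT t (Qfull T V) (Qfull T Vb) =
      (∏ i : Fin n, phiTCond t (V i) (Vb i) (tiltedInput t T V Vb i)) ∧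
    Real.log (phiT t (Qfull T V) (Qfull T Vb)) =
      ∑ i : Fin n, Real.log (phiTCond t (V i) (Vb i) (tiltedInput t T V Vb i)) :=
  phiT_chain_rule_general t T hT V Vb hVpos hVbpos
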